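/- Let ν be a Borel probability measure supported in (0,1]^d, let A ⊂ R^d be a finite set, and let E be a finite family of dyadic cubes of side length 2^{-n} each satisfying ν(Q)Λ(Q)^{r/d} ≥ 2^{-αn}, such that for distinct Q, Q' ∈ E the 3-fold concentric enlargements of Q and Q' have disjoint interiors. If card(A) ≤ card(E)/2, then ∫ d(x,A)^r dν(x) ≥ (card(E)/2) · 2^{-αn}. -/

import Mathlib

open MeasureTheory Metric

/-- The half-open dyadic cube of generation `n` indexed by `k ∈ ℤ^d`. -/
def dyadicCube (d n : ℕ) (k : Fin d → ℤ) : Set (EuclideanSpace ℝ (Fin d)) :=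
  {x | ∀ i, (k i : ℝ) * 2 ^ (-(n : ℤ)) < x i ∧ x i ≤ ((k i : ℝ) + 1) * 2 ^ (-(n : ℤ))}

/-- The interior of the 3-fold concentric enlargement of the dyadic cube of
generation `n` indexed by `k`. -/
def enlargedOpenCube (d n : ℕ) (k : Fin d → ℤ) : Set (EuclideanSpace ℝ (Fin d)) :=
  {x | ∀ i, |x i - ((k i : ℝ) + 1 / 2) * 2 ^ (-(n : ℤ))| < (3 / 2) * 2 ^ (-(n : ℤ))}

lemma abs_coord_le_dist {d : ℕ} (x y : EuclideanSpace ℝ (Fin d)) (i : Fin d) :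
    |x i - y i| ≤ dist x y := by
  rw [EuclideanSpace.dist_eq]
  have h1 : |x i - y i| = Real.sqrt (dist (x i) (y i) ^ 2) := by
    rw [Real.sqrt_sq_eq_abs, Real.dist_eq, abs_abs]
  rw [h1]
  exact Real.sqrt_le_sqrt
    (Finset.single_le_sum (f := fun j => dist (x j) (y j) ^ 2)
      (fun j _ => sq_nonneg _) (Finset.mem_univ i))

lemma dyadicCube_measurable (d n : ℕ) (k : Fin d → ℤ) :
    MeasurableSet (dyadicCube d n k) := by
  have : dyadicCube d n k
      = ⋂ i, (fun x : EuclideanSpace ℝ (Fin d) => x i) ⁻¹'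
          Set.Ioc ((k i : ℝ) * 2 ^ (-(n : ℤ))) (((k i : ℝ) + 1) * 2 ^ (-(n : ℤ))) := by
    ext x; simp [dyadicCube, Set.mem_Ioc, Set.mem_iInter]
  rw [this]
  exact MeasurableSet.iInter fun i =>
    ((EuclideanSpace.proj i).continuous.measurable) measurableSet_Ioc

lemma dyadicCube_subset_enlarged (d n : ℕ) (k : Fin d → ℤ) :
    dyadicCube d n k ⊆ enlargedOpenCube d n k := by
  intro x hx i
  have h := hx i
  have hh : (0:ℝ) < 2 ^ (-(n : ℤ)) := by positivity
  rw [abs_lt]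
  constructor <;> nlinarith [h.1, h.2]

/-- If `E` is a family of generation-`n` dyadic cubes with
`ν(Q) Λ(Q)^{r/d} ≥ 2^{-αn}` whose 3-fold enlargements have pairwise disjoint
interiors, and `A` is a finite nonempty set with `card A ≤ card E / 2`, then
`∫ d(x,A)^r dν ≥ (card E / 2) · 2^{-αn}`. -/
theorem integral_infDist_lower_bound {d : ℕ} (ν : Measure (EuclideanSpace ℝ (Fin d)))
    [IsProbabilityMeasure ν]
    (hsupp : ν ({x : EuclideanSpace ℝ (Fin d) | ∀ i, x i ∈ Set.Ioc (0 : ℝ) 1}ᶜ) = 0)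
    (r α : ℝ) (hr : 0 < r) (hα : 0 < α) (n : ℕ)
    (E : Finset (Fin d → ℤ)) (A : Finset (EuclideanSpace ℝ (Fin d))) (hA0 : A.Nonempty)
    (hbig : ∀ k ∈ E, (2 : ℝ) ^ (-(α * n)) ≤
      (ν (dyadicCube d n k)).toReal * ((2 : ℝ) ^ (-(n : ℤ))) ^ r)
    (hdisj : ∀ k ∈ E, ∀ k' ∈ E, k ≠ k' →
      Disjoint (enlargedOpenCube d n k) (enlargedOpenCube d n k'))
    (hcard : (A.card : ℝ) ≤ (E.card : ℝ) / 2) :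
    ((E.card : ℝ) / 2) * (2 : ℝ) ^ (-(α * n)) ≤
      ∫ x, infDist x (A : Set (EuclideanSpace ℝ (Fin d))) ^ r ∂ν := by
  classical
  set f : EuclideanSpace ℝ (Fin d) → ℝ :=
    fun x => infDist x (A : Set (EuclideanSpace ℝ (Fin d))) ^ r with hfdef
  have hfc : Continuous f :=
    (continuous_infDist_pt _).rpow_const (fun _ => Or.inr hr.le)
  have hf0 : ∀ x, 0 ≤ f x := fun x => Real.rpow_nonneg infDist_nonneg r
  obtain ⟨a₀, ha₀⟩ := hA0
  have hAne : Nonempty (A : Set (EuclideanSpace ℝ (Fin d))) := ⟨⟨a₀, by exact_mod_cast ha₀⟩⟩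
  -- integrability
  have hfint : Integrable f ν := by
    set M : ℝ := Real.sqrt d + ‖a₀‖ with hM
    refine Integrable.mono' (integrable_const (M ^ r)) hfc.aestronglyMeasurable ?_
    have hae : ∀ᵐ x ∂ν, x ∈ {x : EuclideanSpace ℝ (Fin d) | ∀ i, x i ∈ Set.Ioc (0 : ℝ) 1} := by
      rw [ae_iff]
      convert hsupp using 2
      rfl
    filter_upwards [hae] with x hx
    rw [Real.norm_of_nonneg (hf0 x)]
    have hxn : ‖x‖ ≤ Real.sqrt d := by
      rw [EuclideanSpace.norm_eq]
      calc Real.sqrt (∑ i, ‖x i‖ ^ 2) ≤ Real.sqrt (∑ _i : Fin d, (1:ℝ)) := by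
            apply Real.sqrt_le_sqrt
            apply Finset.sum_le_sum
            intro i _
            have := hx i
            have h1 : |x i| ≤ 1 := abs_le.mpr ⟨by linarith [this.1], this.2⟩
            calc ‖x i‖ ^ 2 = |x i| ^ 2 := by rw [Real.norm_eq_abs]
              _ ≤ 1 ^ 2 := pow_le_pow_left₀ (abs_nonneg _) h1 2
              _ = 1 := one_pow 2
        _ = Real.sqrt d := by simp
    have h1 : infDist x (A : Set (EuclideanSpace ℝ (Fin d))) ≤ M := by
      refine le_trans (infDist_le_dist_of_mem (by exact_mod_cast ha₀)) ?_
      calc dist x a₀ ≤ ‖x‖ + ‖a₀‖ := by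
            rw [dist_eq_norm]; exact norm_sub_le _ _
        _ ≤ M := by rw [hM]; gcongr
    exact Real.rpow_le_rpow infDist_nonneg h1 hr.le
  -- the good subfamily
  set E' : Finset (Fin d → ℤ) :=
    E.filter (fun k => ∀ a ∈ A, a ∉ enlargedOpenCube d n k) with hE'
  -- cardinality bound
  have hcardE' : (E.card : ℝ) / 2 ≤ (E'.card : ℝ) := by
    have hsplit := Finset.card_filter_add_card_filter_not
      (s := E) (p := fun k => ∀ a ∈ A, a ∉ enlargedOpenCube d n k)
    have hneg : (E.filter (fun k => ¬ ∀ a ∈ A, a ∉ enlargedOpenCube d n k)).card ≤ A.card := by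
      set g : (Fin d → ℤ) → EuclideanSpace ℝ (Fin d) := fun k =>
        if h : ∃ a, a ∈ A ∧ a ∈ enlargedOpenCube d n k then h.choose else a₀ with hg
      apply Finset.card_le_card_of_injOn g
      · intro k hk
        rw [Finset.mem_coe, Finset.mem_filter] at hk
        obtain ⟨hkE, hk2⟩ := hk
        push_neg at hk2
        obtain ⟨a, haA, hae⟩ := hk2
        have hex : ∃ a, a ∈ A ∧ a ∈ enlargedOpenCube d n k := ⟨a, haA, hae⟩
        simp only [hg, dif_pos hex]
        exact hex.choose_spec.1
      · intro k hk k' hk' hgg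
        by_contra hne
        rw [Finset.coe_filter, Set.mem_setOf_eq] at hk hk'
        obtain ⟨hkE, hk2⟩ := hk
        obtain ⟨hkE', hk2'⟩ := hk'
        push_neg at hk2 hk2'
        obtain ⟨a, haA, hae⟩ := hk2
        obtain ⟨a', haA', hae'⟩ := hk2'
        have hex : ∃ b, b ∈ A ∧ b ∈ enlargedOpenCube d n k := ⟨a, haA, hae⟩
        have hex' : ∃ b, b ∈ A ∧ b ∈ enlargedOpenCube d n k' := ⟨a', haA', hae'⟩
        have h1 : g k ∈ enlargedOpenCube d n k := by
          simp only [hg, dif_pos hex]; exact hex.choose_spec.2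
        have h2 : g k' ∈ enlargedOpenCube d n k' := by
          simp only [hg, dif_pos hex']; exact hex'.choose_spec.2
        rw [hgg] at h1
        exact Set.disjoint_left.mp (hdisj k hkE k' hkE' hne) h1 h2
    have : (E.card : ℝ) ≤ (E'.card : ℝ) + (A.card : ℝ) := by
      rw [← hsplit]
      push_cast
      have : ((E.filter (fun k => ¬ ∀ a ∈ A, a ∉ enlargedOpenCube d n k)).card : ℝ)
          ≤ (A.card : ℝ) := by exact_mod_cast hneg
      linarith
    linarith
  -- pointwise lower bound on good cubes
  have hlow : ∀ k ∈ E', ∀ x ∈ dyadicCube d n k, ((2:ℝ) ^ (-(n:ℤ))) ^ r ≤ f x := by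
    intro k hk x hx
    rw [Finset.mem_filter] at hk
    have hh : (0:ℝ) < 2 ^ (-(n : ℤ)) := by positivity
    apply Real.rpow_le_rpow hh.le ?_ hr.le
    rw [infDist_eq_iInf]
    refine le_ciInf fun a => ?_
    have haA : (a : EuclideanSpace ℝ (Fin d)) ∈ A := by exact_mod_cast a.2
    have hna := hk.2 a haA
    rw [enlargedOpenCube, Set.mem_setOf_eq] at hna
    push_neg at hna
    obtain ⟨i, hi⟩ := hna
    have hxi : |x i - ((k i : ℝ) + 1 / 2) * 2 ^ (-(n : ℤ))| ≤ (1/2) * 2 ^ (-(n : ℤ)) := by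
      have h := hx i
      rw [abs_le]
      constructor <;> nlinarith [h.1, h.2]
    have htri : (2:ℝ) ^ (-(n:ℤ)) ≤ |x i - (a : EuclideanSpace ℝ (Fin d)) i| := by
      have h3 : |(a : EuclideanSpace ℝ (Fin d)) i - ((k i : ℝ) + 1 / 2) * 2 ^ (-(n : ℤ))|
          ≤ |(a : EuclideanSpace ℝ (Fin d)) i - x i|
            + |x i - ((k i : ℝ) + 1 / 2) * 2 ^ (-(n : ℤ))| := by
        calc _ = |((a : EuclideanSpace ℝ (Fin d)) i - x i)
              + (x i - ((k i : ℝ) + 1 / 2) * 2 ^ (-(n : ℤ)))| := by ring_nf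
          _ ≤ _ := abs_add_le _ _
      rw [abs_sub_comm]
      linarith
    calc (2:ℝ) ^ (-(n:ℤ)) ≤ |x i - (a : EuclideanSpace ℝ (Fin d)) i| := htri
      _ ≤ dist x a := abs_coord_le_dist _ _ i
  -- per-cube integral bound
  have hkey : ∀ k ∈ E', (2:ℝ) ^ (-(α * n)) ≤ ∫ x in dyadicCube d n k, f x ∂ν := by
    intro k hk
    have hkE : k ∈ E := (Finset.mem_filter.mp hk).1
    calc (2:ℝ) ^ (-(α * n))
        ≤ (ν (dyadicCube d n k)).toReal * ((2:ℝ) ^ (-(n:ℤ))) ^ r := hbig k hkE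
      _ = ((2:ℝ) ^ (-(n:ℤ))) ^ r * (ν (dyadicCube d n k)).toReal := mul_comm _ _
      _ ≤ ∫ x in dyadicCube d n k, f x ∂ν :=
          setIntegral_ge_of_const_le_real (dyadicCube_measurable d n k)
            (measure_ne_top ν _) (hlow k hk) hfint.integrableOn
  -- disjointness of cubes in E'
  have hpd : Set.Pairwise (↑E' : Set (Fin d → ℤ)) (Function.onFun Disjoint fun k => dyadicCube d n k) := by
    intro k hk k' hk' hne
    have hkE : k ∈ E := (Finset.mem_filter.mp (by exact_mod_cast hk)).1
    have hkE' : k' ∈ E := (Finset.mem_filter.mp (by exact_mod_cast hk')).1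
    exact (hdisj k hkE k' hkE' hne).mono
      (dyadicCube_subset_enlarged d n k) (dyadicCube_subset_enlarged d n k')
  -- assemble
  have hunion : ∫ x in ⋃ k ∈ E', dyadicCube d n k, f x ∂ν
      = ∑ k ∈ E', ∫ x in dyadicCube d n k, f x ∂ν :=
    integral_biUnion_finset E' (fun k _ => dyadicCube_measurable d n k) hpd
      (fun k _ => hfint.integrableOn)
  calc ((E.card : ℝ) / 2) * (2 : ℝ) ^ (-(α * n))
      ≤ (E'.card : ℝ) * (2 : ℝ) ^ (-(α * n)) := by
        apply mul_le_mul_of_nonneg_right hcardE' (by positivity)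
    _ = ∑ _k ∈ E', (2 : ℝ) ^ (-(α * n)) := by
        rw [Finset.sum_const, nsmul_eq_mul]
    _ ≤ ∑ k ∈ E', ∫ x in dyadicCube d n k, f x ∂ν := Finset.sum_le_sum hkey
    _ = ∫ x in ⋃ k ∈ E', dyadicCube d n k, f x ∂ν := hunion.symm
    _ ≤ ∫ x, f x ∂ν := setIntegral_le_integral hfint (Filter.Eventually.of_forall hf0)
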